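/- The divergence (trace of the Jacobian) of the full block soft thresholding estimator μ̂(y), defined blockwise on a partition B of {1,…,N} as μ̂(y)_b = S_λ(y_b), equals |J| − λ Σ_{b⊂J} (|b|−1)/‖y_b‖, where J is the union of blocks b with ‖y_b‖ > λ, at any point y where no block satisfies ‖y_b‖ = λ. -/

import Mathlib

/-!
Where no block has `‖y_b‖ = λ`, the set of active blocks is locally constant, so near `y` the
estimator is, block by block, either `0` or `y_b ↦ (1 - λ/‖y_b‖) y_b`. With `r = ‖y_b‖`, the latter
has Jacobian `(1 - λ/r) I + (λ/r³) y_b y_bᵀ`, whose trace is `|b| (1 - λ/r) + λ/r`.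
-/

open Finset

/-- Euclidean norm of the subvector of `y` on the block `k`. -/
noncomputable def blockNorm {N K : ℕ} (c : Fin N → Fin K) (y : Fin N → ℝ) (k : Fin K) : ℝ :=
  Real.sqrt (∑ i ∈ Finset.univ.filter (fun i => c i = k), y i ^ 2)

/-- The full block soft thresholding estimator on `ℝ^N`, applied blockwise. -/
noncomputable def blockSoftEst {N K : ℕ} (lam : ℝ) (c : Fin N → Fin K)
    (y : Fin N → ℝ) : Fin N → ℝ := fun i =>
  if blockNorm c y (c i) < lam then 0
  else (1 - lam / blockNorm c y (c i)) * y i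

open Filter Topology

section

variable {N K : ℕ} (c : Fin N → Fin K)

lemma blockNorm_sq (y : Fin N → ℝ) (k : Fin K) :
    blockNorm c y k ^ 2 = ∑ i ∈ univ.filter (fun i => c i = k), y i ^ 2 :=
  Real.sq_sqrt (sum_nonneg fun _ _ => sq_nonneg _)

lemma continuous_blockNorm (k : Fin K) : Continuous fun y => blockNorm c y k := by
  unfold blockNorm
  fun_prop

noncomputable def blockNormGrad (y : Fin N → ℝ) (k : Fin K) : (Fin N → ℝ) →L[ℝ] ℝ :=
  (blockNorm c y k)⁻¹ • ∑ j ∈ univ.filter (fun i => c i = k), y j • ContinuousLinearMap.proj j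

lemma hasFDerivAt_blockNorm {y : Fin N → ℝ} {k : Fin K} (hy : blockNorm c y k ≠ 0) :
    HasFDerivAt (fun z => blockNorm c z k) (blockNormGrad c y k) y := by
  have hsq : HasFDerivAt (fun z : Fin N → ℝ => ∑ j ∈ univ.filter (fun i => c i = k), z j ^ 2)
      (∑ j ∈ univ.filter (fun i => c i = k), (2 * y j) • ContinuousLinearMap.proj j) y :=
    HasFDerivAt.fun_sum fun j _ => by
      simpa only [Nat.add_one_sub_one, pow_one, nsmul_eq_mul, Nat.cast_ofNat] using
        (hasFDerivAt_apply (𝕜 := ℝ) (F' := fun _ : Fin N => ℝ) j y).pow 2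
  have hq : ∑ j ∈ univ.filter (fun i => c i = k), y j ^ 2 ≠ 0 := by
    rw [← blockNorm_sq]
    exact pow_ne_zero 2 hy
  refine (hsq.sqrt hq).congr_fderiv ?_
  ext v
  simp only [blockNormGrad, one_div, mul_inv_rev, smul_sum, smul_smul,
    _root_.sum_apply, smul_apply, ContinuousLinearMap.proj_apply,
    smul_eq_mul]
  refine sum_congr rfl fun i _ => ?_
  unfold blockNorm
  ring

lemma blockNormGrad_single (y : Fin N → ℝ) (i : Fin N) :
    blockNormGrad c y (c i) (Pi.single i 1) = y i / blockNorm c y (c i) := by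
  simp [blockNormGrad, Pi.single_apply, div_eq_inv_mul]

lemma hasFDerivAt_shrink_mul_apply (lam : ℝ) {y : Fin N → ℝ} (i : Fin N)
    (hy : blockNorm c y (c i) ≠ 0) :
    ∃ L : (Fin N → ℝ) →L[ℝ] ℝ,
      HasFDerivAt (fun z => (1 - lam / blockNorm c z (c i)) * z i) L y ∧
      L (Pi.single i 1) =
        1 - lam / blockNorm c y (c i) + lam * y i ^ 2 / blockNorm c y (c i) ^ 3 := by
  have hshrink := ((hasDerivAt_inv hy).const_mul lam).const_sub 1
  have hD := (hshrink.comp_hasFDerivAt y (hasFDerivAt_blockNorm c hy)).mul (hasFDerivAt_apply i y)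
  simp only [div_eq_mul_inv]
  refine ⟨_, hD, ?_⟩
  simp only [Function.comp_apply, mul_neg, neg_neg, add_apply,
    smul_apply, ContinuousLinearMap.proj_apply, Pi.single_eq_same,
    smul_eq_mul, mul_one, blockNormGrad_single, add_right_inj]
  field_simp

variable (lam : ℝ)

noncomputable def frozenBlockSoftEst (y z : Fin N → ℝ) : Fin N → ℝ := fun i =>
  if blockNorm c y (c i) < lam then 0
  else (1 - lam / blockNorm c z (c i)) * z i

noncomputable def blockSoftEstJacDiag (y : Fin N → ℝ) (i : Fin N) : ℝ :=
  if blockNorm c y (c i) < lam then 0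
  else 1 - lam / blockNorm c y (c i) + lam * y i ^ 2 / blockNorm c y (c i) ^ 3

lemma blockSoftEst_eventuallyEq_frozen {y : Fin N → ℝ} (hy : ∀ k, blockNorm c y k ≠ lam) :
    blockSoftEst lam c =ᶠ[𝓝 y] frozenBlockSoftEst c lam y := by
  have hstable : ∀ k, ∀ᶠ z in 𝓝 y, blockNorm c z k < lam ↔ blockNorm c y k < lam := by
    intro k
    have hcont := (continuous_blockNorm c k).continuousAt (x := y)
    rcases (hy k).lt_or_gt with h | h
    · filter_upwards [hcont.eventually_lt continuousAt_const h] with z hz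
      simp [hz, h]
    · filter_upwards [continuousAt_const.eventually_lt hcont h] with z hz
      simp [hz.not_gt, h.not_gt]
  filter_upwards [eventually_all.2 hstable] with z hz
  funext i
  simp only [blockSoftEst, frozenBlockSoftEst, hz (c i)]

lemma hasFDerivAt_frozenBlockSoftEst_apply (hlam : 0 < lam) (y : Fin N → ℝ) (i : Fin N) :
    ∃ L : (Fin N → ℝ) →L[ℝ] ℝ, HasFDerivAt (fun z => frozenBlockSoftEst c lam y z i) L y ∧
      L (Pi.single i 1) = blockSoftEstJacDiag c lam y i := by
  by_cases h : blockNorm c y (c i) < lam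
  · refine ⟨0, ?_, ?_⟩
    · simpa [frozenBlockSoftEst, h] using hasFDerivAt_const (0 : ℝ) y
    · simp [blockSoftEstJacDiag, h]
  · simpa [frozenBlockSoftEst, blockSoftEstJacDiag, h] using
      hasFDerivAt_shrink_mul_apply c lam i (hlam.trans_le (not_lt.1 h)).ne'

lemma sum_blockSoftEstJacDiag_block (hlam : 0 < lam) {y : Fin N → ℝ} {k : Fin K}
    (hk : blockNorm c y k ≠ lam) :
    ∑ i ∈ univ.filter (fun i => c i = k), blockSoftEstJacDiag c lam y i =
      if lam < blockNorm c y k then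
        (#(univ.filter (fun i => c i = k)) : ℝ) -
          lam * (((#(univ.filter (fun i => c i = k)) : ℝ) - 1) / blockNorm c y k)
      else 0 := by
  rw [sum_congr rfl fun i hi => by rw [blockSoftEstJacDiag, (mem_filter.1 hi).2]]
  rcases hk.lt_or_gt with hinactive | hactive
  · simp only [if_pos hinactive, if_neg hinactive.not_gt, sum_const_zero]
  · have hr : blockNorm c y k ≠ 0 := (hlam.trans hactive).ne'
    simp only [if_neg hactive.not_gt, if_pos hactive]
    rw [sum_add_distrib, sum_const, nsmul_eq_mul,
      ← sum_div, ← mul_sum, ← blockNorm_sq]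
    field_simp
    ring

end

/-- At any `y` with `‖y_b‖ ≠ λ` for every block `b`, the blockwise soft
thresholding estimator is differentiable, and the trace of its Jacobian
(its divergence) equals `|J| − λ Σ_{b ⊂ J} (|b| − 1)/‖y_b‖`, where `J` is the
union of the blocks `b` with `‖y_b‖ > λ`. -/
theorem stmt_11 {N K : ℕ} (lam : ℝ) (hlam : 0 < lam) (c : Fin N → Fin K)
    (y : Fin N → ℝ) (hy : ∀ k : Fin K, blockNorm c y k ≠ lam) :
    ∃ D : (Fin N → ℝ) →L[ℝ] (Fin N → ℝ),
      HasFDerivAt (blockSoftEst lam c) D y ∧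
      ∑ i, D (Pi.single i 1) i =
        (∑ k ∈ Finset.univ.filter (fun k => lam < blockNorm c y k),
            ((Finset.univ.filter (fun i => c i = k)).card : ℝ)) -
          lam * ∑ k ∈ Finset.univ.filter (fun k => lam < blockNorm c y k),
            (((Finset.univ.filter (fun i => c i = k)).card : ℝ) - 1) /
              blockNorm c y k := by
  choose L hL hdiag using hasFDerivAt_frozenBlockSoftEst_apply c lam hlam y
  refine ⟨ContinuousLinearMap.pi L,
    (hasFDerivAt_pi.2 hL).congr_of_eventuallyEq (blockSoftEst_eventuallyEq_frozen c lam hy), ?_⟩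
  simp only [ContinuousLinearMap.pi_apply, hdiag]
  rw [← sum_fiberwise univ c, sum_filter, sum_filter, mul_sum, ← sum_sub_distrib]
  refine sum_congr rfl fun k _ => ?_
  rw [sum_blockSoftEstJacDiag_block c lam hlam (hy k)]
  split_ifs <;> ring
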